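/- Let n and i be integers with 1 ≤ i ≤ n−1, and let π be a permutation of length n which avoids both 1243 and 2143 and satisfies π(i+1) = n. Let σ₁ be the permutation of length i which is order-isomorphic to the sequence π(1), …, π(i), and let σ₂ be the permutation of length n−i formed by the entries of π with values in {1, …, n−i}, taken in their order of appearance in π. Then for every k ≥ 1, τ_k(π) = τ_k(σ₁) + τ_{k−1}(σ₁) + τ_k(σ₂). -/

import Mathlib

/-!
Let the maximum `n` of `π` follow its first `i` entries. Classify the increasing subsequences of
length `k ≥ 2` by where their last entry lies. Those ending before the maximum are the increasing
subsequences of `σ₁`; those ending at it are increasing subsequences of `σ₁` of length `k - 1`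
followed by the maximum. Avoiding 1243 and 2143 means that no entry after the maximum exceeds two
entries before it; by counting, the entries below `n - i` are then all those after the maximum and
a single one before it. Hence the subsequences ending after the maximum are exactly the increasing
subsequences of `σ₂` of length `k ≥ 2`. For `k = 1` the identity reads `n = i + 0 + (n - i)`.
-/

/-- `π` contains the pattern `σ`. -/
def PContains {k n : ℕ} (σ : Equiv.Perm (Fin k)) (π : Equiv.Perm (Fin n)) : Prop :=
  ∃ f : Fin k → Fin n, StrictMono f ∧ ∀ a b : Fin k, π (f a) < π (f b) ↔ σ a < σ b

/-- `π` avoids the pattern `σ`. -/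
def PAvoids {k n : ℕ} (σ : Equiv.Perm (Fin k)) (π : Equiv.Perm (Fin n)) : Prop :=
  ¬ PContains σ π

/-- The pattern 1243 (in one-line notation, 1-based). -/
def p1243 : Equiv.Perm (Fin 4) := ⟨![0, 1, 3, 2], ![0, 1, 3, 2], by decide, by decide⟩

/-- The pattern 2143 (in one-line notation, 1-based). -/
def p2143 : Equiv.Perm (Fin 4) := ⟨![1, 0, 3, 2], ![1, 0, 3, 2], by decide, by decide⟩

/-- `π` avoids both 1243 and 2143. -/
def AvoidsBoth {n : ℕ} (π : Equiv.Perm (Fin n)) : Prop :=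
  PAvoids p1243 π ∧ PAvoids p2143 π

/-- `τ_k(π)`: the number of increasing subsequences of length `k` in `π`
(with the convention `τ_0 = 0`). -/
noncomputable def tauPerm (k : ℕ) {n : ℕ} (π : Equiv.Perm (Fin n)) : ℕ :=
  if k = 0 then 0 else
    Nat.card {f : Fin k → Fin n // StrictMono f ∧ StrictMono (fun a => π (f a))}

/-- The number of occurrences (subsequences of type `σ`) of the pattern `σ` in `π`. -/
noncomputable def numOcc {k n : ℕ} (σ : Equiv.Perm (Fin k)) (π : Equiv.Perm (Fin n)) : ℕ :=
  Nat.card {f : Fin k → Fin n // StrictMono f ∧ ∀ a b : Fin k, π (f a) < π (f b) ↔ σ a < σ b}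

open Finset

theorem pContains_of_forall_lt_imp {k n : ℕ} {σ : Equiv.Perm (Fin k)} {π : Equiv.Perm (Fin n)}
    (f : Fin k → Fin n) (hf : StrictMono f) (h : ∀ a b, σ a < σ b → π (f a) < π (f b)) :
    PContains σ π := by
  refine ⟨f, hf, fun a b => ⟨fun hab => ?_, h a b⟩⟩
  rcases lt_trichotomy (σ a) (σ b) with hlt | heq | hgt
  · exact hlt
  · rw [σ.injective heq] at hab
    exact absurd hab (lt_irrefl _)
  · exact absurd (h b a hgt) hab.asymm

theorem AvoidsBoth.not_lt_and_lt {n : ℕ} {π : Equiv.Perm (Fin n)} (hav : AvoidsBoth π)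
    {p₁ p₂ p q : Fin n} (h₁₂ : p₁ < p₂) (h₂ : p₂ < p) (hq : p < q) (hqp : π q < π p) :
    ¬ (π p₁ < π q ∧ π p₂ < π q) := by
  rintro ⟨h₁q, h₂q⟩
  have hmono : StrictMono ![p₁, p₂, p, q] := by
    rw [Fin.strictMono_iff_lt_succ]
    intro a
    fin_cases a <;> assumption
  rcases lt_or_gt_of_ne (π.injective.ne h₁₂.ne) with h | h
  · refine hav.1 (pContains_of_forall_lt_imp _ hmono fun a b hab => ?_)
    fin_cases a <;> fin_cases b <;> simp [p1243] at hab ⊢ <;> order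
  · refine hav.2 (pContains_of_forall_lt_imp _ hmono fun a b hab => ?_)
    fin_cases a <;> fin_cases b <;> simp [p2143] at hab ⊢ <;> order

theorem card_filter_val_apply_lt {n c : ℕ} (π : Equiv.Perm (Fin n)) (hc : c ≤ n) :
    #{x | (π x : ℕ) < c} = c := by
  rw [card_equiv π (t := {v : Fin n | (v : ℕ) < c}) (fun x => by simp), Fin.card_filter_val_lt,
    min_eq_right hc]

section Maximum

variable {n : ℕ} {π : Equiv.Perm (Fin n)} {p : Fin n}

theorem apply_lt_of_apply_eq_sub_one (hp : (π p : ℕ) = n - 1) {q : Fin n} (hq : q ≠ p) :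
    π q < π p := by
  have hne : (π q : ℕ) ≠ n - 1 := fun h => hq (π.injective (Fin.ext (h.trans hp.symm)))
  have := (π q).isLt
  rw [Fin.lt_def, hp]
  omega

/-- At most one value below `π q` precedes the maximum (two would form a 1243 or 2143 with it),
and the others lie after it. -/
theorem AvoidsBoth.apply_lt_sub_of_lt (hav : AvoidsBoth π) (hp : (π p : ℕ) = n - 1)
    {q : Fin n} (hq : p < q) : (π q : ℕ) < n - p := by
  have hqp := apply_lt_of_apply_eq_sub_one hp hq.ne'
  have hsub : ({x | π x < π q} : Finset (Fin n)) ⊆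
      ({x | x < p ∧ π x < π q} : Finset (Fin n)) ∪ (Ioi p).erase q := by
    intro x hx
    simp only [mem_filter, mem_univ, true_and] at hx
    have hxp : x ≠ p := by rintro rfl; exact hqp.not_gt hx
    have hxq : x ≠ q := by rintro rfl; exact lt_irrefl _ hx
    rcases lt_or_gt_of_ne hxp with h | h
    · simp [h, hx]
    · simp [h, hxq]
  have hbefore : #({x | x < p ∧ π x < π q} : Finset (Fin n)) ≤ 1 := by
    refine card_le_one.2 fun a ha b hb => ?_
    simp only [mem_filter, mem_univ, true_and] at ha hb
    by_contra hab
    rcases lt_or_gt_of_ne hab with h | h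
    · exact hav.not_lt_and_lt h hb.1 hq hqp ⟨ha.2, hb.2⟩
    · exact hav.not_lt_and_lt h ha.1 hq hqp ⟨hb.2, ha.2⟩
  have hafter : #((Ioi p).erase q) = n - 1 - p - 1 := by
    rw [card_erase_of_mem (mem_Ioi.2 hq), Fin.card_Ioi]
  have hbelow : #({x | π x < π q} : Finset (Fin n)) = π q := by
    simpa only [Fin.lt_def] using card_filter_val_apply_lt π (π q).isLt.le
  have := (card_le_card hsub).trans (card_union_le _ _)
  have := Fin.card_Ioi p
  have : 0 < #(Ioi p) := card_pos.2 ⟨q, mem_Ioi.2 hq⟩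
  omega

/-- All `n - 1 - p` positions after the maximum carry values below `n - p`, and there are only
`n - p` such values. -/
theorem AvoidsBoth.lt_of_apply_lt_sub (hav : AvoidsBoth π) (hp : (π p : ℕ) = n - 1)
    (hp₀ : 1 ≤ (p : ℕ)) {x y : Fin n} (hxy : x < y) (hx : (π x : ℕ) < n - p)
    (hy : (π y : ℕ) < n - p) : p < y := by
  by_contra hyp
  have hyp : y < p := lt_of_le_of_ne (not_lt.1 hyp) (by rintro rfl; omega)
  have hsub : insert x (insert y (Ioi p)) ⊆ ({z | (π z : ℕ) < n - p} : Finset (Fin n)) := by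
    intro z hz
    simp only [mem_insert, mem_Ioi] at hz
    rcases hz with rfl | rfl | hz
    · simpa using hx
    · simpa using hy
    · simpa using hav.apply_lt_sub_of_lt hp hz
  have hcard := card_le_card hsub
  rw [card_filter_val_apply_lt π (Nat.sub_le n p), card_insert_of_notMem, card_insert_of_notMem,
    Fin.card_Ioi] at hcard
  · omega
  · simpa using hyp.le
  · simp [hxy.ne, (hxy.trans hyp).le]

end Maximum

theorem Nat.card_subtype_eq_lt_add_eq_add_gt {α β : Type*} [Fintype α] [LinearOrder β]
    (P : α → Prop) (x : α → β) (c : β) :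
    Nat.card {a // P a} =
      Nat.card {a // P a ∧ x a < c} + Nat.card {a // P a ∧ x a = c} +
        Nat.card {a // P a ∧ c < x a} := by
  classical
  simp only [Nat.card_eq_fintype_card, Fintype.card_subtype]
  rw [← card_union_of_disjoint, ← card_union_of_disjoint, ← filter_or, ← filter_or]
  · congr 1
    ext a
    simp only [mem_filter, mem_univ, true_and, ← and_or_left, iff_self_and]
    exact fun _ => or_assoc.2 (lt_trichotomy (x a) c)
  · exact disjoint_union_left.2 ⟨disjoint_filter.2 fun _ _ h h' => h.2.asymm h'.2,
      disjoint_filter.2 fun _ _ h h' => h'.2.ne h.2.symm⟩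
  · exact disjoint_filter.2 fun _ _ h h' => h.2.ne h'.2

theorem Fin.strictMono_snoc {α : Type*} [Preorder α] {m : ℕ} {f : Fin m → α} (hf : StrictMono f)
    {x : α} (hx : ∀ a, f a < x) : StrictMono (Fin.snoc (α := fun _ => α) f x) := by
  intro a b hab
  obtain ⟨a, rfl⟩ := Fin.eq_castSucc_of_ne_last (Fin.ne_last_of_lt hab)
  induction b using Fin.lastCases with
  | last => simpa using hx a
  | cast b => simpa using hf (Fin.castSucc_lt_castSucc_iff.1 hab)

def IsIncSubseq {k n : ℕ} (π : Equiv.Perm (Fin n)) (f : Fin k → Fin n) : Prop :=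
  StrictMono f ∧ StrictMono (π ∘ f)

section IncSubseq

variable {k m n : ℕ} {π : Equiv.Perm (Fin n)}

theorem tauPerm_zero (ρ : Equiv.Perm (Fin m)) : tauPerm 0 ρ = 0 := if_pos rfl

theorem tauPerm_eq_card (hk : k ≠ 0) (ρ : Equiv.Perm (Fin m)) :
    tauPerm k ρ = Nat.card {f : Fin k → Fin m // IsIncSubseq ρ f} :=
  if_neg hk

theorem tauPerm_one (ρ : Equiv.Perm (Fin m)) : tauPerm 1 ρ = m := by
  rw [tauPerm_eq_card one_ne_zero]
  exact (Nat.card_congr <| (Equiv.subtypeUnivEquiv fun f =>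
    ⟨Subsingleton.strictMono f, Subsingleton.strictMono _⟩).trans
      (Equiv.funUnique (Fin 1) (Fin m))).trans (Nat.card_fin m)

theorem card_isIncSubseq_comp {ρ : Equiv.Perm (Fin m)} {e : Fin m → Fin n} (he : StrictMono e)
    (hρ : ∀ a b, ρ a < ρ b ↔ π (e a) < π (e b)) :
    Nat.card {f : Fin k → Fin m // IsIncSubseq ρ f} =
      Nat.card {f : Fin k → Fin n // IsIncSubseq π f ∧ ∀ a, f a ∈ Set.range e} := by
  refine Nat.card_congr (Equiv.ofBijective
    (fun f => ⟨e ∘ f.1, ⟨he.comp f.2.1, fun a b hab => (hρ _ _).1 (f.2.2 hab)⟩,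
      fun a => ⟨f.1 a, rfl⟩⟩) ⟨fun f f' hff' => ?_, fun f => ?_⟩)
  · exact Subtype.ext (he.injective.comp_left (congrArg Subtype.val hff'))
  · choose h hh using f.2.2
    have hf : f.1 = e ∘ h := funext fun a => (hh a).symm
    refine ⟨⟨h, fun a b hab => ?_, fun a b hab => ?_⟩, Subtype.ext hf.symm⟩
    · exact he.lt_iff_lt.1 (by simpa [hf] using f.2.1.1 hab)
    · exact (hρ _ _).2 (by simpa [hf] using f.2.1.2 hab)

theorem card_isIncSubseq_castLE {p : Fin n} {ρ : Equiv.Perm (Fin p)}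
    (hρ : ∀ a b, ρ a < ρ b ↔ π (Fin.castLE p.isLt.le a) < π (Fin.castLE p.isLt.le b)) :
    Nat.card {f : Fin k → Fin p // IsIncSubseq ρ f} =
      Nat.card {f : Fin k → Fin n // IsIncSubseq π f ∧ ∀ a, f a < p} := by
  rw [card_isIncSubseq_comp (Fin.strictMono_castLE _) hρ, Fin.range_castLE]
  rfl

theorem card_isIncSubseq_last_lt (p : Fin n) :
    Nat.card {f : Fin (m + 1) → Fin n // IsIncSubseq π f ∧ f (Fin.last m) < p} =
      Nat.card {f : Fin (m + 1) → Fin n // IsIncSubseq π f ∧ ∀ a, f a < p} :=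
  Nat.card_congr <| Equiv.subtypeEquivRight fun _ => and_congr_right fun hf =>
    ⟨fun h a => (hf.1.monotone (Fin.le_last a)).trans_lt h, fun h => h _⟩

theorem card_isIncSubseq_last_eq {p : Fin n} (hp : ∀ q ≠ p, π q < π p) :
    Nat.card {f : Fin (m + 1) → Fin n // IsIncSubseq π f ∧ f (Fin.last m) = p} =
      Nat.card {f : Fin m → Fin n // IsIncSubseq π f ∧ ∀ a, f a < p} := by
  refine Nat.card_congr
    { toFun f := ⟨Fin.init f.1, ⟨f.2.1.1.comp Fin.strictMono_castSucc, ?_⟩, fun a => ?_⟩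
      invFun f := ⟨Fin.snoc f.1 p, ⟨Fin.strictMono_snoc f.2.1.1 f.2.2, ?_⟩, Fin.snoc_last _ _⟩
      left_inv f := ?_
      right_inv f := Subtype.ext (Fin.init_snoc (α := fun _ => Fin n) _ _) }
  · exact f.2.1.2.comp Fin.strictMono_castSucc
  · exact (f.2.1.1 (Fin.castSucc_lt_last a)).trans_eq f.2.2
  · rw [Fin.comp_snoc]
    exact Fin.strictMono_snoc f.2.1.2 fun a => hp _ (f.2.2 a).ne
  · refine Subtype.ext ?_
    conv_rhs => rw [← Fin.snoc_init_self f.1, f.2.2]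

end IncSubseq

theorem mem_range_of_val_apply_lt {m n : ℕ} {π : Equiv.Perm (Fin n)} {g : Fin m → Fin n}
    (hg : Function.Injective g) (hm : m ≤ n) (hgv : ∀ j, (π (g j) : ℕ) < m) {x : Fin n}
    (hx : (π x : ℕ) < m) : x ∈ Set.range g := by
  have himage : univ.image g = ({x | (π x : ℕ) < m} : Finset (Fin n)) :=
    eq_of_subset_of_card_le (fun x hx => by obtain ⟨j, -, rfl⟩ := mem_image.1 hx; simpa using hgv j)
      (by rw [card_filter_val_apply_lt π hm, card_image_of_injective _ hg, card_univ,
        Fintype.card_fin])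
  have hx' : x ∈ univ.image g := by simpa [himage] using hx
  simpa using hx'

theorem AvoidsBoth.card_isIncSubseq_last_gt {m n : ℕ} {π : Equiv.Perm (Fin n)} {p : Fin n}
    (hav : AvoidsBoth π) (hp : (π p : ℕ) = n - 1) (hp₀ : 1 ≤ (p : ℕ))
    {g : Fin (n - p) → Fin n} (hg : StrictMono g) (hgv : ∀ j, (π (g j) : ℕ) < n - p)
    {ρ : Equiv.Perm (Fin (n - p))} (hρ : ∀ a b, ρ a < ρ b ↔ π (g a) < π (g b)) :
    Nat.card {f : Fin (m + 2) → Fin n // IsIncSubseq π f ∧ p < f (Fin.last (m + 1))} =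
      Nat.card {f : Fin (m + 2) → Fin (n - p) // IsIncSubseq ρ f} := by
  rw [card_isIncSubseq_comp hg hρ]
  refine Nat.card_congr <| Equiv.subtypeEquivRight fun f => and_congr_right fun hf => ⟨?_, ?_⟩
  · intro hlast a
    refine mem_range_of_val_apply_lt hg.injective (Nat.sub_le n p) hgv ?_
    exact lt_of_le_of_lt (hf.2.monotone (Fin.le_last a)) (hav.apply_lt_sub_of_lt hp hlast)
  · intro hrange
    have hsmall : ∀ a, (π (f a) : ℕ) < n - p := fun a => by
      obtain ⟨j, hj⟩ := hrange a
      exact hj ▸ hgv j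
    exact hav.lt_of_apply_lt_sub hp hp₀ (hf.1 (Fin.castSucc_lt_last (Fin.last m)))
      (hsmall _) (hsmall _)

/-- Let 1 ≤ i ≤ n−1 and let π be a permutation of length n avoiding 1243
and 2143 with π(i+1) = n (one-line, 1-based).  Let σ₁ (of length i) be order-isomorphic
to π(1), …, π(i), and let σ₂ (of length n−i) consist of the entries of π with values in
{1, …, n−i}, in order of appearance.  Then for every k ≥ 1,
τ_k(π) = τ_k(σ₁) + τ_{k−1}(σ₁) + τ_k(σ₂). -/
theorem stmt_3 (n i : ℕ) (h1 : 1 ≤ i) (h2 : i ≤ n - 1)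
    (π : Equiv.Perm (Fin n)) (hav : AvoidsBoth π)
    (hπ : (π ⟨i, by omega⟩ : ℕ) = n - 1)
    (σ₁ : Equiv.Perm (Fin i))
    (hσ₁ : ∀ a b : Fin i, σ₁ a < σ₁ b ↔
      π ⟨a.1, by have := a.isLt; omega⟩ < π ⟨b.1, by have := b.isLt; omega⟩)
    (σ₂ : Equiv.Perm (Fin (n - i)))
    (g : Fin (n - i) → Fin n) (hg : StrictMono g)
    (hgv : ∀ j : Fin (n - i), (π (g j) : ℕ) < n - i)
    (hσ₂ : ∀ j : Fin (n - i), (σ₂ j : ℕ) = (π (g j) : ℕ))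
    (k : ℕ) (hk : 1 ≤ k) :
    tauPerm k π = tauPerm k σ₁ + tauPerm (k - 1) σ₁ + tauPerm k σ₂ := by
  have hi : i < n := by omega
  set p : Fin n := ⟨i, hi⟩
  obtain rfl | ⟨m, rfl⟩ : k = 1 ∨ ∃ m, k = m + 2 := by
    rcases k with _ | _ | m <;> simp_all
  · rw [tauPerm_one, tauPerm_one, tauPerm_one, tauPerm_zero]
    omega
  have hσ₂' : ∀ a b, σ₂ a < σ₂ b ↔ π (g a) < π (g b) := by
    simp only [Fin.lt_def, hσ₂, implies_true]
  have hbefore := card_isIncSubseq_last_lt (π := π) (m := m + 1) p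
  have hat := card_isIncSubseq_last_eq (m := m + 1)
    fun q hq => apply_lt_of_apply_eq_sub_one hπ hq
  have hafter := hav.card_isIncSubseq_last_gt (m := m) hπ h1 hg hgv hσ₂'
  rw [← card_isIncSubseq_castLE (p := p) hσ₁] at hbefore hat
  rw [← tauPerm_eq_card (by omega)] at hbefore hat hafter
  rw [tauPerm_eq_card (by omega),
    Nat.card_subtype_eq_lt_add_eq_add_gt _ (fun f => f (Fin.last _)) p, hbefore, hat, hafter]
  rfl
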